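/- The converse inclusion Mod(O1 ∥ O2) ⊆ Mod(O1) ⊗ Mod(O2) fails in general: there exist operational ed specifications O1, O2 over composable signatures such that Mod(O1) = ∅ (hence Mod(O1) ⊗ Mod(O2) = ∅) while Mod(O1 ∥ O2) ≠ ∅. Concretely, for Σ = ({e}, ∅), O1 with single control state c_{1,0}, transitions T1 = {(c_{1,0}, true, e, false, c_{1,0})}, initial predicate true, and O2 with single control state c_{2,0}, no transitions, and initial predicate true: Mod(O1) = ∅, but the edts consisting of just the initial configuration is a model of O1 ∥ O2. -/
import Mathlib


/-!
Framework: ed signatures `(E, A)` are given by a set `E : Set Ev` of events and a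
set `A : Set At` of attributes over fixed universes `Ev` of events, `At` of
attributes and `D` of data values.  An `A`-data state is a function `↥A → D`.
State predicates are predicates on data states, transition predicates are
predicates on pairs of data states.
-/

/-- The raw data of a `(E, A)`-event/data transition system with control states `C`. -/
structure PreEDTS {Ev At : Type} (E : Set Ev) (A : Set At) (D : Type) (C : Type) :
    Type where
  conf : Set (C × (↥A → D))
  rel : ↥E → Set ((C × (↥A → D)) × (C × (↥A → D)))
  c0 : C
  init : Set (C × (↥A → D))

/-- `M` is a genuine `(E, A)`-edts: transitions stay inside the configurations, the
initial configurations form a non-empty subset of the configurations, all with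
control state `c0`, and every configuration is reachable from an initial one. -/
def PreEDTS.IsEDTS {Ev At D C : Type} {E : Set Ev} {A : Set At}
    (M : PreEDTS E A D C) : Prop :=
  (∀ (e : ↥E) p, p ∈ M.rel e → p.1 ∈ M.conf ∧ p.2 ∈ M.conf) ∧
  M.init ⊆ M.conf ∧
  (∀ γ ∈ M.init, γ.1 = M.c0) ∧
  M.init.Nonempty ∧
  (∀ γ ∈ M.conf, ∃ γ0 ∈ M.init,
    Relation.ReflTransGen (fun γ γ' => ∃ e : ↥E, (γ, γ') ∈ M.rel e) γ0 γ)

/-- The raw data of an operational ed specification over `(E, A)` with control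
states from `C`: a set of control states, a transition relation specification
`T ⊆ C × stFrm × E × trFrm × C`, an initial control state and an initial state
predicate. -/
structure OpSpec {Ev At : Type} (E : Set Ev) (A : Set At) (D : Type) (C : Type) :
    Type where
  states : Set C
  T : Set (C × ((↥A → D) → Prop) × ↥E × ((↥A → D) → (↥A → D) → Prop) × C)
  c0 : C
  φ0 : (↥A → D) → Prop

/-- Well-formedness of an operational ed specification: the transitions connect
control states of the specification, and the control states are syntactically
reachable from the initial control state. -/
def OpSpec.WF {Ev At D C : Type} {E : Set Ev} {A : Set At}
    (O : OpSpec E A D C) : Prop :=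
  O.c0 ∈ O.states ∧
  (∀ t ∈ O.T, t.1 ∈ O.states ∧ t.2.2.2.2 ∈ O.states) ∧
  (∀ c ∈ O.states,
    Relation.ReflTransGen (fun c c' => ∃ φ e ψ, (c, φ, e, ψ, c') ∈ O.T) O.c0 c)

/-- `M` is a model of the operational ed specification `O`: the control states of
`M` are those of `O` (up to bijective renaming), the initial control state is the
one of `O`, all initial data states satisfy `φ0`, every specified transition whose
precondition holds at a reachable configuration is realised respecting its
transition predicate, and every transition of `M` is licensed by some specified
transition whose precondition and transition predicate hold. -/
def IsModel {Ev At D C : Type} {E : Set Ev} {A : Set At}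
    (O : OpSpec E A D C) (M : PreEDTS E A D C) : Prop :=
  M.c0 = O.c0 ∧
  (∀ γ ∈ M.conf, γ.1 ∈ O.states) ∧
  (∀ c ∈ O.states, ∃ ω, (c, ω) ∈ M.conf) ∧
  (∀ γ ∈ M.init, O.φ0 γ.2) ∧
  (∀ c φ e ψ c', (c, φ, e, ψ, c') ∈ O.T → ∀ ω, (c, ω) ∈ M.conf → φ ω →
    ∃ ω', ((c, ω), (c', ω')) ∈ M.rel e ∧ ψ ω ω') ∧
  (∀ (e : ↥E) γ γ', (γ, γ') ∈ M.rel e →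
    ∃ φ ψ, (γ.1, φ, e, ψ, γ'.1) ∈ O.T ∧ φ γ.2 ∧ ψ γ.2 γ'.2)

section Parallel

variable {Ev At D C₁ C₂ : Type} {E₁ E₂ : Set Ev} {A₁ A₂ : Set At}

/-- Restriction of an `(A₁ ∪ A₂)`-data state to `A₁`. -/
def res₁ (A₁ A₂ : Set At) (ω : ↥(A₁ ∪ A₂) → D) : ↥A₁ → D :=
  fun a => ω ⟨a.1, Set.mem_union_left A₂ a.2⟩

/-- Restriction of an `(A₁ ∪ A₂)`-data state to `A₂`. -/
def res₂ (A₁ A₂ : Set At) (ω : ↥(A₁ ∪ A₂) → D) : ↥A₂ → D :=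
  fun a => ω ⟨a.1, Set.mem_union_right A₁ a.2⟩

open Classical in
/-- `ω₁ + ω₂`: the `(A₁ ∪ A₂)`-data state restricting to `ωᵢ` on `Aᵢ`
(for composable, i.e. disjoint, attribute sets). -/
noncomputable def glue (A₁ A₂ : Set At) (ω₁ : ↥A₁ → D) (ω₂ : ↥A₂ → D) :
    ↥(A₁ ∪ A₂) → D :=
  fun a =>
    if h : a.1 ∈ A₁ then ω₁ ⟨a.1, h⟩
    else ω₂ ⟨a.1, ((Set.mem_union _ _ _).mp a.2).resolve_left h⟩

/-- Injection of an event of `E₁` into `E₁ ∪ E₂`. -/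
def inE₁ (E₁ E₂ : Set Ev) (e : ↥E₁) : ↥(E₁ ∪ E₂) := ⟨e.1, Set.mem_union_left E₂ e.2⟩

/-- Injection of an event of `E₂` into `E₁ ∪ E₂`. -/
def inE₂ (E₁ E₂ : Set Ev) (e : ↥E₂) : ↥(E₁ ∪ E₂) := ⟨e.1, Set.mem_union_right E₁ e.2⟩

/-- The inductively generated control states of the syntactic parallel
composition `O₁ ∥ O₂`. -/
inductive ParSt (O₁ : OpSpec E₁ A₁ D C₁) (O₂ : OpSpec E₂ A₂ D C₂) : C₁ × C₂ → Prop
  | init : ParSt O₁ O₂ (O₁.c0, O₂.c0)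
  | left {c₁ c₂ φ₁ ψ₁ c₁'} (e : ↥E₁) : ParSt O₁ O₂ (c₁, c₂) → e.1 ∉ E₂ →
      (c₁, φ₁, e, ψ₁, c₁') ∈ O₁.T → ParSt O₁ O₂ (c₁', c₂)
  | right {c₁ c₂ φ₂ ψ₂ c₂'} (e : ↥E₂) : ParSt O₁ O₂ (c₁, c₂) → e.1 ∉ E₁ →
      (c₂, φ₂, e, ψ₂, c₂') ∈ O₂.T → ParSt O₁ O₂ (c₁, c₂')
  | sync {c₁ c₂ φ₁ ψ₁ c₁' φ₂ ψ₂ c₂'} (e₁ : ↥E₁) (e₂ : ↥E₂) : ParSt O₁ O₂ (c₁, c₂) →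
      e₁.1 = e₂.1 → (c₁, φ₁, e₁, ψ₁, c₁') ∈ O₁.T → (c₂, φ₂, e₂, ψ₂, c₂') ∈ O₂.T →
      ParSt O₁ O₂ (c₁', c₂')

/-- The syntactic parallel composition `O₁ ∥ O₂` of operational ed specifications
(over composable signatures): non-shared events move one component, with the
attributes of the other component unchanged (`id`), and shared events move both
components simultaneously, with conjoined preconditions and transition predicates. -/
noncomputable def parSpec (O₁ : OpSpec E₁ A₁ D C₁) (O₂ : OpSpec E₂ A₂ D C₂) :
    OpSpec (E₁ ∪ E₂) (A₁ ∪ A₂) D (C₁ × C₂) where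
  states := {c | ParSt O₁ O₂ c}
  T := { t | ParSt O₁ O₂ t.1 ∧ (
      (∃ (e : ↥E₁), ∃ φ₁ ψ₁ c₁', e.1 ∉ E₂ ∧ (t.1.1, φ₁, e, ψ₁, c₁') ∈ O₁.T ∧
        t.2.1 = (fun ω => φ₁ (res₁ A₁ A₂ ω)) ∧
        t.2.2.1 = inE₁ E₁ E₂ e ∧
        t.2.2.2.1 = (fun ω ω' => ψ₁ (res₁ A₁ A₂ ω) (res₁ A₁ A₂ ω') ∧
          res₂ A₁ A₂ ω' = res₂ A₁ A₂ ω) ∧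
        t.2.2.2.2 = (c₁', t.1.2)) ∨
      (∃ (e : ↥E₂), ∃ φ₂ ψ₂ c₂', e.1 ∉ E₁ ∧ (t.1.2, φ₂, e, ψ₂, c₂') ∈ O₂.T ∧
        t.2.1 = (fun ω => φ₂ (res₂ A₁ A₂ ω)) ∧
        t.2.2.1 = inE₂ E₁ E₂ e ∧
        t.2.2.2.1 = (fun ω ω' => ψ₂ (res₂ A₁ A₂ ω) (res₂ A₁ A₂ ω') ∧
          res₁ A₁ A₂ ω' = res₁ A₁ A₂ ω) ∧
        t.2.2.2.2 = (t.1.1, c₂')) ∨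
      (∃ (e₁ : ↥E₁) (e₂ : ↥E₂), ∃ φ₁ ψ₁ c₁' φ₂ ψ₂ c₂', e₁.1 = e₂.1 ∧
        (t.1.1, φ₁, e₁, ψ₁, c₁') ∈ O₁.T ∧ (t.1.2, φ₂, e₂, ψ₂, c₂') ∈ O₂.T ∧
        t.2.1 = (fun ω => φ₁ (res₁ A₁ A₂ ω) ∧ φ₂ (res₂ A₁ A₂ ω)) ∧
        t.2.2.1 = inE₁ E₁ E₂ e₁ ∧
        t.2.2.2.1 = (fun ω ω' => ψ₁ (res₁ A₁ A₂ ω) (res₁ A₁ A₂ ω') ∧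
          ψ₂ (res₂ A₁ A₂ ω) (res₂ A₁ A₂ ω')) ∧
        t.2.2.2.2 = (c₁', c₂'))) }
  c0 := (O₁.c0, O₂.c0)
  φ0 := fun ω => O₁.φ0 (res₁ A₁ A₂ ω) ∧ O₂.φ0 (res₂ A₁ A₂ ω)

/-- Parallel composition `γ₁ ⊗ γ₂` of configurations. -/
noncomputable def pconf (γ₁ : C₁ × (↥A₁ → D)) (γ₂ : C₂ × (↥A₂ → D)) :
    (C₁ × C₂) × (↥(A₁ ∪ A₂) → D) :=
  ((γ₁.1, γ₂.1), glue A₁ A₂ γ₁.2 γ₂.2)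

/-- The inductively generated configurations of the semantic parallel
composition `M₁ ⊗ M₂`. -/
inductive ParConf (M₁ : PreEDTS E₁ A₁ D C₁) (M₂ : PreEDTS E₂ A₂ D C₂) :
    (C₁ × C₂) × (↥(A₁ ∪ A₂) → D) → Prop
  | init : ∀ γ₁ γ₂, γ₁ ∈ M₁.init → γ₂ ∈ M₂.init → ParConf M₁ M₂ (pconf γ₁ γ₂)
  | left : ∀ (e : ↥E₁) γ₁ γ₁' γ₂, e.1 ∉ E₂ → ParConf M₁ M₂ (pconf γ₁ γ₂) →
      (γ₁, γ₁') ∈ M₁.rel e → ParConf M₁ M₂ (pconf γ₁' γ₂)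
  | right : ∀ (e : ↥E₂) γ₁ γ₂ γ₂', e.1 ∉ E₁ → ParConf M₁ M₂ (pconf γ₁ γ₂) →
      (γ₂, γ₂') ∈ M₂.rel e → ParConf M₁ M₂ (pconf γ₁ γ₂')
  | sync : ∀ (e₁ : ↥E₁) (e₂ : ↥E₂) γ₁ γ₁' γ₂ γ₂', e₁.1 = e₂.1 →
      ParConf M₁ M₂ (pconf γ₁ γ₂) → (γ₁, γ₁') ∈ M₁.rel e₁ → (γ₂, γ₂') ∈ M₂.rel e₂ →
      ParConf M₁ M₂ (pconf γ₁' γ₂')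

/-- The transition relations of the semantic parallel composition `M₁ ⊗ M₂`. -/
def parRel (M₁ : PreEDTS E₁ A₁ D C₁) (M₂ : PreEDTS E₂ A₂ D C₂) (e : ↥(E₁ ∪ E₂)) :
    Set (((C₁ × C₂) × (↥(A₁ ∪ A₂) → D)) × ((C₁ × C₂) × (↥(A₁ ∪ A₂) → D))) :=
  { p |
    (∃ (e₁ : ↥E₁), ∃ γ₁ γ₁' γ₂, e₁.1 = e.1 ∧ e₁.1 ∉ E₂ ∧
      ParConf M₁ M₂ (pconf γ₁ γ₂) ∧ (γ₁, γ₁') ∈ M₁.rel e₁ ∧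
      p = (pconf γ₁ γ₂, pconf γ₁' γ₂)) ∨
    (∃ (e₂ : ↥E₂), ∃ γ₁ γ₂ γ₂', e₂.1 = e.1 ∧ e₂.1 ∉ E₁ ∧
      ParConf M₁ M₂ (pconf γ₁ γ₂) ∧ (γ₂, γ₂') ∈ M₂.rel e₂ ∧
      p = (pconf γ₁ γ₂, pconf γ₁ γ₂')) ∨
    (∃ (e₁ : ↥E₁) (e₂ : ↥E₂), ∃ γ₁ γ₁' γ₂ γ₂', e₁.1 = e.1 ∧ e₂.1 = e.1 ∧
      ParConf M₁ M₂ (pconf γ₁ γ₂) ∧ (γ₁, γ₁') ∈ M₁.rel e₁ ∧ (γ₂, γ₂') ∈ M₂.rel e₂ ∧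
      p = (pconf γ₁ γ₂, pconf γ₁' γ₂')) }

/-- The semantic parallel composition `M₁ ⊗ M₂` (the parallel composition
constructor `κ⊗` applied to `M₁` and `M₂`). -/
noncomputable def parEDTS (M₁ : PreEDTS E₁ A₁ D C₁) (M₂ : PreEDTS E₂ A₂ D C₂) :
    PreEDTS (E₁ ∪ E₂) (A₁ ∪ A₂) D (C₁ × C₂) where
  conf := {γ | ParConf M₁ M₂ γ}
  rel := parRel M₁ M₂
  c0 := (M₁.c0, M₂.c0)
  init := {γ | ∃ γ₁ ∈ M₁.init, ∃ γ₂ ∈ M₂.init, γ = pconf γ₁ γ₂}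

end Parallel

/-! ### The concrete counterexample
The ed signature `Σ = ({e}, ∅)` is modelled by the event set `Set.univ : Set Unit`
and the attribute set `∅ : Set Unit` over the data universe `Unit`. -/

/-- The single event `e`. -/
def eEx : ↥(Set.univ : Set Unit) := ⟨(), trivial⟩

/-- `O₁`: a single control state `c₁₀`, the single transition specification
`(c₁₀, true, e, false, c₁₀)`, and initial state predicate `true`. -/
def O1ex : OpSpec (Set.univ : Set Unit) (∅ : Set Unit) Unit Unit where
  states := Set.univ
  T := {t | t = ((), fun _ => True, eEx, fun _ _ => False, ())}
  c0 := ()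
  φ0 := fun _ => True

/-- `O₂`: a single control state `c₂₀`, no transition specifications, and initial
state predicate `true`. -/
def O2ex : OpSpec (Set.univ : Set Unit) (∅ : Set Unit) Unit Unit where
  states := Set.univ
  T := ∅
  c0 := ()
  φ0 := fun _ => True

/-- The witness edts for `O₁ ∥ O₂`: just the initial configuration, no transitions. -/
def Mex : PreEDTS ((Set.univ : Set Unit) ∪ (Set.univ : Set Unit))
    ((∅ : Set Unit) ∪ (∅ : Set Unit)) Unit (Unit × Unit) where
  conf := {(((), ()), fun _ => ())}
  rel := fun _ => ∅
  c0 := ((), ())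
  init := {(((), ()), fun _ => ())}

lemma parT_empty : (parSpec O1ex O2ex).T = ∅ := by
  ext t
  simp only [parSpec, Set.mem_setOf_eq, Set.mem_empty_iff_false, iff_false]
  rintro ⟨_, h | h | h⟩
  · obtain ⟨e, _, _, _, he, _⟩ := h
    exact he trivial
  · obtain ⟨e, _, _, _, _, hT, _⟩ := h
    exact hT
  · obtain ⟨_, _, _, _, _, _, _, _, _, _, hT, _⟩ := h
    exact hT


/-- `O₁` and `O₂` are (well-formed) operational ed specifications
over composable signatures with `Mod(O₁) = ∅` (hence `Mod(O₁) ⊗ Mod(O₂) = ∅`),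
while `Mod(O₁ ∥ O₂) ≠ ∅`: the edts consisting of just the initial configuration
(no transitions) is a model of `O₁ ∥ O₂`.  Hence the converse inclusion
`Mod(O₁ ∥ O₂) ⊆ Mod(O₁) ⊗ Mod(O₂)` fails in general. -/
theorem converse_inclusion_fails :
    O1ex.WF ∧ O2ex.WF ∧
    Disjoint (∅ : Set Unit) (∅ : Set Unit) ∧
    (∀ M : PreEDTS (Set.univ : Set Unit) (∅ : Set Unit) Unit Unit,
      M.IsEDTS → ¬ IsModel O1ex M) ∧
    (∃ M : PreEDTS ((Set.univ : Set Unit) ∪ (Set.univ : Set Unit))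
        ((∅ : Set Unit) ∪ (∅ : Set Unit)) Unit (Unit × Unit),
      M.IsEDTS ∧ M.conf = M.init ∧ (∀ e, M.rel e = ∅) ∧
      IsModel (parSpec O1ex O2ex) M) := by
  refine ⟨⟨trivial, fun t _ => ⟨trivial, trivial⟩, fun c _ => ?_⟩,
    ⟨trivial, fun t _ => ⟨trivial, trivial⟩, fun c _ => ?_⟩,
    disjoint_bot_left, ?_, ?_⟩
  · exact Relation.ReflTransGen.refl
  · exact Relation.ReflTransGen.refl
  · rintro M hM ⟨hc0, hconf, hst, hinit, hreal, hlic⟩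
    obtain ⟨γ, hγ⟩ := hM.2.2.2.1
    have hγc : γ ∈ M.conf := hM.2.1 hγ
    have := hreal () (fun _ => True) eEx (fun _ _ => False) () rfl γ.2 (by
      have : ((), γ.2) = γ := by
        ext
      rw [this]; exact hγc) trivial
    obtain ⟨ω', _, hfalse⟩ := this
    exact hfalse
  · refine ⟨Mex, ⟨?_, le_refl _, ?_, ?_, ?_⟩, rfl, fun e => rfl, ?_⟩
    · rintro e p hp
      exact absurd hp (Set.notMem_empty p)
    · rintro γ hγ
      rfl
    · exact ⟨_, rfl⟩
    · intro γ hγ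
      exact ⟨γ, hγ, Relation.ReflTransGen.refl⟩
    · refine ⟨rfl, ?_, ?_, ?_, ?_, ?_⟩
      · rintro γ hγ
        exact ParSt.init
      · intro c hc
        refine ⟨fun _ => (), ?_⟩
        have : c = ((), ()) := rfl
        rw [this]
        exact rfl
      · intro γ hγ
        exact ⟨trivial, trivial⟩
      · intro c φ e ψ c' hT
        rw [parT_empty] at hT
        exact absurd hT (Set.notMem_empty _)
      · intro e γ γ' h
        exact absurd h (Set.notMem_empty _)
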